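/- Let b > 0, c > 0, q₀ ∈ (0,1), and let S : ℝ → ℝ satisfy 0 < S(u) < 1 for all u. Let (u,v,w) be a solution of the fast system (2) and set w̄ = √2·b. If at some time τ, 0 < v(τ) < 1 and w(τ) > w̄, then there exists t ∈ (τ, τ + √2/b] with v(t) ≥ 1; if instead 0 < v(τ) < 1 and w(τ) < −w̄, then there exists t ∈ (τ, τ + √2/b] with v(t) ≤ 0. In particular, if |w(τ)| > w̄ and 0 < v(τ) < 1, then v leaves the interval (0,1) at some time after τ. -/

import Mathlib

open Filter Topology

/-- `r = (u,v,w)` solves the fast system (2). -/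
def SolFast (b : ℝ) (S : ℝ → ℝ) (q₀ c : ℝ) (u v w : ℝ → ℝ) : Prop :=
  ∀ t : ℝ,
    HasDerivAt u ((v t - u t) / c) t ∧
    HasDerivAt v (w t) t ∧
    HasDerivAt w (b ^ 2 * (v t - q₀ * S (u t))) t

/-!
While `v ≥ 0` the acceleration `w' = b²(v - q₀ S(u))` is at least `-b²`, so `w` decreases at most
linearly and stays positive on `[τ, τ + √2/b]` when `w(τ) > √2 b`. A first-exit argument shows that
`v` therefore never reaches `0` there, and integrating twice gives
`v(τ + √2/b) ≥ v(τ) + w(τ)·√2/b - 1 > 1`. The case `w(τ) < -√2 b` is the mirror image under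
`(v, w) ↦ (1 - v, -w)`, since `w' ≤ b²` while `v ≤ 1`.
-/

open Set

lemma mul_sub_le_sub_of_le_hasDerivAt {f f' : ℝ → ℝ} {a b C t : ℝ}
    (hf : ∀ x, HasDerivAt f (f' x) x) (hC : ∀ x ∈ Ioo a b, C ≤ f' x) (ht : t ∈ Icc a b) :
    C * (t - a) ≤ f t - f a := by
  refine (convex_Icc a b).mul_sub_le_image_sub_of_le_deriv
    (fun x _ => (hf x).continuousAt.continuousWithinAt)
    (fun x _ => (hf x).differentiableAt.differentiableWithinAt) (fun x hx => ?_)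
    a (left_mem_Icc.2 (ht.1.trans ht.2)) t ht ht.1
  rw [(hf x).deriv]
  exact hC x (by rwa [interior_Icc] at hx)

lemma exists_first_nonpos {f : ℝ → ℝ} {a b : ℝ} (hf : ContinuousOn f (Icc a b)) (ha : 0 < f a)
    (h : ∃ s ∈ Icc a b, f s ≤ 0) : ∃ t₀ ∈ Ioc a b, f t₀ ≤ 0 ∧ ∀ s ∈ Ico a t₀, 0 < f s := by
  have hcompact : IsCompact (Icc a b ∩ f ⁻¹' Iic 0) :=
    isCompact_Icc.of_isClosed_subset (hf.preimage_isClosed_of_isClosed isClosed_Icc isClosed_Iic)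
      inter_subset_left
  obtain ⟨t₀, ⟨ht₀, hft₀⟩, hleast⟩ := hcompact.exists_isLeast h
  refine ⟨t₀, ⟨ht₀.1.lt_of_ne ?_, ht₀.2⟩, hft₀, fun s hs => ?_⟩
  · rintro rfl
    exact (lt_irrefl 0) (ha.trans_le hft₀)
  · by_contra! hfs
    exact (hleast ⟨⟨hs.1, hs.2.le.trans ht₀.2⟩, hfs⟩).not_gt hs.2

section Kinematics

variable {v w g : ℝ → ℝ} {k τ T : ℝ}
  (hv : ∀ t, HasDerivAt v (w t) t) (hw : ∀ t, HasDerivAt w (g t) t)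
  (hg : ∀ t, 0 ≤ v t → -k ≤ g t)
include hw hg

lemma speed_lower_bound {t₁ t : ℝ} (hv_nonneg : ∀ s ∈ Ioo τ t₁, 0 ≤ v s) (ht : t ∈ Icc τ t₁) :
    w τ - k * (t - τ) ≤ w t := by
  linarith [mul_sub_le_sub_of_le_hasDerivAt hw (fun s hs => hg s (hv_nonneg s hs)) ht]

include hv

lemma pos_of_initial_speed_gt (hk : 0 ≤ k) (hv0 : 0 < v τ) (hwτ : k * T < w τ) :
    ∀ t ∈ Icc τ (τ + T), 0 < v t := by
  by_contra! h
  obtain ⟨t₀, ht₀, hvt₀, hpos⟩ :=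
    exists_first_nonpos (fun x _ => (hv x).continuousAt.continuousWithinAt) hv0 h
  have hw_nonneg : ∀ s ∈ Ioo τ t₀, 0 ≤ w s := fun s hs => by
    have hws := speed_lower_bound hw hg (fun r hr => (hpos r ⟨hr.1.le, hr.2⟩).le)
      (Ioo_subset_Icc_self hs)
    have : k * (s - τ) ≤ k * T := mul_le_mul_of_nonneg_left (by linarith [hs.2, ht₀.2]) hk
    linarith
  have hv_mono := mul_sub_le_sub_of_le_hasDerivAt hv hw_nonneg (right_mem_Icc.2 ht₀.1.le)
  linarith

lemma position_lower_bound (hk : 0 ≤ k) (hT : 0 ≤ T) (hv0 : 0 < v τ) (hwτ : k * T < w τ) :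
    v τ + w τ * T - k * T ^ 2 / 2 ≤ v (τ + T) := by
  have hpos := pos_of_initial_speed_gt hv hw hg hk hv0 hwτ
  have hderiv : ∀ t, HasDerivAt (fun t => v t - w τ * (t - τ) + k * (t - τ) ^ 2 / 2)
      (w t - w τ + k * (t - τ)) t := fun t => by
    have hlin := ((hasDerivAt_id t).sub_const τ).const_mul (w τ)
    have hsq := ((((hasDerivAt_id t).sub_const τ).fun_pow 2).const_mul k).div_const 2
    exact (((hv t).fun_sub hlin).fun_add hsq).congr_deriv (by simp only [id]; ring)
  have hderiv_nonneg : ∀ t ∈ Ioo τ (τ + T), 0 ≤ w t - w τ + k * (t - τ) := fun t ht => by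
    linarith [speed_lower_bound hw hg (fun s hs => (hpos s (Ioo_subset_Icc_self hs)).le)
      (Ioo_subset_Icc_self ht)]
  have := mul_sub_le_sub_of_le_hasDerivAt hderiv hderiv_nonneg (right_mem_Icc.2 (by linarith))
  simp only [add_sub_cancel_left, sub_self] at this
  linarith

end Kinematics

lemma one_lt_position_of_speed_gt {v w g : ℝ → ℝ} {b τ : ℝ} (hb : 0 < b)
    (hv : ∀ t, HasDerivAt v (w t) t) (hw : ∀ t, HasDerivAt w (g t) t)
    (hg : ∀ t, 0 ≤ v t → -b ^ 2 ≤ g t) (hv0 : 0 < v τ) (hwτ : Real.sqrt 2 * b < w τ) :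
    1 < v (τ + Real.sqrt 2 / b) := by
  have hsqrt2 : Real.sqrt 2 ^ 2 = 2 := Real.sq_sqrt zero_le_two
  have hkT : b ^ 2 * (Real.sqrt 2 / b) = Real.sqrt 2 * b := by field_simp
  have hkT2 : b ^ 2 * (Real.sqrt 2 / b) ^ 2 / 2 = 1 := by field_simp; linarith
  have hwT : 2 < w τ * (Real.sqrt 2 / b) :=
    calc 2 = Real.sqrt 2 * b * (Real.sqrt 2 / b) := by field_simp; linarith
      _ < w τ * (Real.sqrt 2 / b) := by gcongr
  have := position_lower_bound hv hw hg (sq_nonneg b) (by positivity) hv0 (hkT ▸ hwτ)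
  linarith

theorem v_leaves_unit_interval_general (b c q₀ : ℝ) (S : ℝ → ℝ)
    (hb : 0 < b) (hq₀ : 0 < q₀) (hq₀' : q₀ < 1)
    (hSpos : ∀ x : ℝ, 0 < S x) (hSlt : ∀ x : ℝ, S x < 1)
    (u v w : ℝ → ℝ) (hr : SolFast b S q₀ c u v w) (τ : ℝ)
    (hv0 : 0 < v τ) (hv1 : v τ < 1) :
    (Real.sqrt 2 * b < w τ →
      ∃ t : ℝ, τ < t ∧ t ≤ τ + Real.sqrt 2 / b ∧ 1 ≤ v t) ∧
    (w τ < -(Real.sqrt 2 * b) →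
      ∃ t : ℝ, τ < t ∧ t ≤ τ + Real.sqrt 2 / b ∧ v t ≤ 0) := by
  have hv t : HasDerivAt v (w t) t := (hr t).2.1
  have hw t : HasDerivAt w (b ^ 2 * (v t - q₀ * S (u t))) t := (hr t).2.2
  have hqS_pos t : 0 < q₀ * S (u t) := mul_pos hq₀ (hSpos _)
  have hqS_lt t : q₀ * S (u t) < 1 := by nlinarith [hSlt (u t)]
  have hT : τ < τ + Real.sqrt 2 / b := by simp only [lt_add_iff_pos_right]; positivity
  refine ⟨fun hwτ => ⟨_, hT, le_rfl, ?_⟩, fun hwτ => ⟨_, hT, le_rfl, ?_⟩⟩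
  · refine (one_lt_position_of_speed_gt hb hv hw (fun t hvt => ?_) hv0 hwτ).le
    nlinarith [hqS_lt t]
  · have := one_lt_position_of_speed_gt (v := fun t => 1 - v t) hb (fun t => (hv t).const_sub 1)
      (fun t => (hw t).neg) (fun t hvt => ?_) (by linarith) (by linarith)
    · linarith
    · nlinarith [hqS_pos t]

/-- Lemma 14 of the paper: if `|w| > √2 b` while `0 < v < 1`,
then `v` leaves `(0,1)` within time `√2 / b`. -/
theorem v_leaves_unit_interval (b c q₀ : ℝ) (S : ℝ → ℝ)
    (hb : 0 < b) (hc : 0 < c) (hq₀ : 0 < q₀) (hq₀' : q₀ < 1)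
    (hSpos : ∀ x : ℝ, 0 < S x) (hSlt : ∀ x : ℝ, S x < 1)
    (u v w : ℝ → ℝ) (hr : SolFast b S q₀ c u v w) (τ : ℝ)
    (hv0 : 0 < v τ) (hv1 : v τ < 1) :
    (Real.sqrt 2 * b < w τ →
      ∃ t : ℝ, τ < t ∧ t ≤ τ + Real.sqrt 2 / b ∧ 1 ≤ v t) ∧
    (w τ < -(Real.sqrt 2 * b) →
      ∃ t : ℝ, τ < t ∧ t ≤ τ + Real.sqrt 2 / b ∧ v t ≤ 0) :=
  v_leaves_unit_interval_general b c q₀ S hb hq₀ hq₀' hSpos hSlt u v w hr τ hv0 hv1
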